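/- arXiv:2508.08813 — 10 statements merged into one kernel-verified Lean document; each statement's English description precedes it below -/
import Mathlib

section
/- For every real exponent r ∈ (1, ∞) there exists a constant c_r > 0 such that for all real numbers a, b that are not both zero, one has (|a|^{r−2}·a − |b|^{r−2}·b)·(a − b) ≥ c_r·(|a| + |b|)^{r−2}·|a − b|² ≥ 0. -/
open Real

private lemma hpow_aux {r : ℝ} (hr : 1 < r) {x : ℝ} (hx : 0 ≤ x) :
    x ^ (r - 2) * x = x ^ (r - 1) := by
  rcases eq_or_lt_of_le hx with h | h
  · rw [← h, mul_zero, Real.zero_rpow (by intro hh; rw [sub_eq_zero] at hh; linarith)]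
  · rw [show r - 1 = r - 2 + 1 by ring, Real.rpow_add_one h.ne']

private lemma lemA {r : ℝ} (hr : 1 < r) {a b : ℝ} (hb : 0 ≤ b) (hba : b ≤ a) :
    (a ^ (r - 2) * a - b ^ (r - 2) * b) * (a - b) ≥
      min (r - 1) ((2 : ℝ) ^ (1 - r)) * (a + b) ^ (r - 2) * (a - b) ^ 2 := by
  have ha : 0 ≤ a := hb.trans hba
  set c : ℝ := min (r - 1) ((2 : ℝ) ^ (1 - r)) with hc
  rcases eq_or_lt_of_le ha with h0 | ha'
  · have hb0 : b = 0 := le_antisymm (by linarith) hb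
    rw [← h0, hb0]
    simp
  have hab : 0 ≤ a - b := by linarith
  rw [hpow_aux hr ha, hpow_aux hr hb]
  have key : c * (a + b) ^ (r - 2) * (a - b) ≤ a ^ (r - 1) - b ^ (r - 1) := by
    rcases le_total r 2 with hr2 | hr2
    · -- 1 < r ≤ 2
      have h1 : (a + b) ^ (r - 2) ≤ a ^ (r - 2) :=
        Real.rpow_le_rpow_of_nonpos ha' (by linarith) (by linarith)
      have h2 : (r - 1) * (a ^ (r - 2) * (a - b)) ≤ a ^ (r - 1) - b ^ (r - 1) := by
        set t : ℝ := b / a with ht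
        have ht0 : 0 ≤ t := div_nonneg hb ha
        have ht1 : t ≤ 1 := (div_le_one ha').2 hba
        have hbt : b = t * a := by rw [ht]; field_simp
        have hbern : (1 + (t - 1)) ^ (r - 1) ≤ 1 + (r - 1) * (t - 1) :=
          rpow_one_add_le_one_add_mul_self (by linarith) (by linarith) (by linarith)
        rw [show (1 : ℝ) + (t - 1) = t by ring] at hbern
        have e1 : b ^ (r - 1) = t ^ (r - 1) * a ^ (r - 1) := by
          rw [hbt, Real.mul_rpow ht0 ha]
        have e3 : a ^ (r - 1) = a ^ (r - 2) * a := (hpow_aux hr ha).symm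
        have hA : 0 ≤ a ^ (r - 2) * a := mul_nonneg (Real.rpow_nonneg ha _) ha
        have e2 : a - b = (1 - t) * a := by rw [hbt]; ring
        rw [e1, e3, e2]
        have : (r - 1) * (1 - t) ≤ 1 - t ^ (r - 1) := by linarith
        nlinarith [mul_le_mul_of_nonneg_right this hA]
      have hcle : c ≤ r - 1 := min_le_left _ _
      have hc0 : 0 ≤ c := le_min (by linarith) (Real.rpow_nonneg (by norm_num) _)
      have hAB : 0 ≤ (a + b) ^ (r - 2) := Real.rpow_nonneg (by linarith) _
      have hA2 : 0 ≤ a ^ (r - 2) := Real.rpow_nonneg ha _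
      calc c * (a + b) ^ (r - 2) * (a - b) ≤ (r - 1) * (a ^ (r - 2)) * (a - b) := by
            apply mul_le_mul_of_nonneg_right _ hab
            exact mul_le_mul hcle h1 hAB (by linarith)
        _ ≤ a ^ (r - 1) - b ^ (r - 1) := by rw [mul_assoc]; exact h2
    · -- 2 ≤ r
      have h2 : a ^ (r - 2) * (a - b) ≤ a ^ (r - 1) - b ^ (r - 1) := by
        have hab2 : b ^ (r - 2) ≤ a ^ (r - 2) := Real.rpow_le_rpow hb hba (by linarith)
        have e3 : a ^ (r - 1) = a ^ (r - 2) * a := (hpow_aux hr ha).symm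
        have e4 : b ^ (r - 1) = b ^ (r - 2) * b := (hpow_aux hr hb).symm
        rw [e3, e4]
        nlinarith [mul_le_mul_of_nonneg_right hab2 hb]
      have h1 : c * (a + b) ^ (r - 2) ≤ a ^ (r - 2) := by
        have hcle : c ≤ (2 : ℝ) ^ (1 - r) := min_le_right _ _
        have h12 : (2 : ℝ) ^ (1 - r) ≤ (2 : ℝ) ^ (2 - r) :=
          Real.rpow_le_rpow_of_exponent_le one_le_two (by linarith)
        have hAB : 0 ≤ (a + b) ^ (r - 2) := Real.rpow_nonneg (by linarith) _
        have e5 : (2 : ℝ) ^ (2 - r) * (a + b) ^ (r - 2) = ((a + b) / 2) ^ (r - 2) := by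
          rw [Real.div_rpow (by linarith) (by norm_num),
            show (2 : ℝ) - r = -(r - 2) by ring, Real.rpow_neg (by norm_num)]
          ring
        have h6 : ((a + b) / 2) ^ (r - 2) ≤ a ^ (r - 2) :=
          Real.rpow_le_rpow (by linarith) (by linarith) (by linarith)
        calc c * (a + b) ^ (r - 2) ≤ (2 : ℝ) ^ (2 - r) * (a + b) ^ (r - 2) := by
              apply mul_le_mul_of_nonneg_right (hcle.trans h12) hAB
          _ = ((a + b) / 2) ^ (r - 2) := e5
          _ ≤ a ^ (r - 2) := h6
      calc c * (a + b) ^ (r - 2) * (a - b) ≤ a ^ (r - 2) * (a - b) :=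
            mul_le_mul_of_nonneg_right h1 hab
        _ ≤ a ^ (r - 1) - b ^ (r - 1) := h2
  have := mul_le_mul_of_nonneg_right key hab
  nlinarith [this]

private lemma lemB {r : ℝ} (hr : 1 < r) {a d : ℝ} (ha : 0 ≤ a) (hd : 0 ≤ d) :
    (a ^ (r - 2) * a + d ^ (r - 2) * d) * (a + d) ≥
      min (r - 1) ((2 : ℝ) ^ (1 - r)) * (a + d) ^ (r - 2) * (a + d) ^ 2 := by
  set c : ℝ := min (r - 1) ((2 : ℝ) ^ (1 - r)) with hc
  set s : ℝ := a + d with hs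
  have hs0 : 0 ≤ s := by positivity
  rcases eq_or_lt_of_le hs0 with h0 | hs'
  · rw [← h0]
    norm_num
  rw [hpow_aux hr ha, hpow_aux hr hd]
  have hcle : c ≤ (2 : ℝ) ^ (1 - r) := min_le_right _ _
  have hmax : (2 : ℝ) ^ (1 - r) * s ^ (r - 1) ≤ a ^ (r - 1) + d ^ (r - 1) := by
    have e : (2 : ℝ) ^ (1 - r) * s ^ (r - 1) = (s / 2) ^ (r - 1) := by
      rw [Real.div_rpow hs0 (by norm_num), show (1 : ℝ) - r = -(r - 1) by ring,
        Real.rpow_neg (by norm_num)]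
      ring
    rw [e]
    rcases le_total a d with h | h
    · have : (s / 2) ^ (r - 1) ≤ d ^ (r - 1) :=
        Real.rpow_le_rpow (by positivity) (by simp only [hs]; linarith) (by linarith)
      have := Real.rpow_nonneg ha (r - 1)
      linarith
    · have : (s / 2) ^ (r - 1) ≤ a ^ (r - 1) :=
        Real.rpow_le_rpow (by positivity) (by simp only [hs]; linarith) (by linarith)
      have := Real.rpow_nonneg hd (r - 1)
      linarith
  have e2 : s ^ (r - 2) * s ^ 2 = s ^ (r - 1) * s := by
    rw [show (s : ℝ) ^ 2 = s * s by ring, ← mul_assoc, hpow_aux hr hs0]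
  have hsr : 0 ≤ s ^ (r - 2) := Real.rpow_nonneg hs0 _
  calc c * s ^ (r - 2) * s ^ 2 ≤ (2 : ℝ) ^ (1 - r) * (s ^ (r - 2) * s ^ 2) := by
        rw [mul_assoc]
        apply mul_le_mul_of_nonneg_right hcle (by positivity)
    _ = ((2 : ℝ) ^ (1 - r) * s ^ (r - 1)) * s := by rw [e2]; ring
    _ ≤ (a ^ (r - 1) + d ^ (r - 1)) * s := mul_le_mul_of_nonneg_right hmax hs0
    _ = (a ^ (r - 1) + d ^ (r - 1)) * (a + d) := rfl

private lemma aux2 {r : ℝ} (hr : 1 < r) {a b : ℝ} (hba : b ≤ a) :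
    (|a| ^ (r - 2) * a - |b| ^ (r - 2) * b) * (a - b) ≥
      min (r - 1) ((2 : ℝ) ^ (1 - r)) * (|a| + |b|) ^ (r - 2) * (a - b) ^ 2 := by
  rcases le_or_gt 0 b with hb | hb
  · have ha : 0 ≤ a := hb.trans hba
    rw [abs_of_nonneg ha, abs_of_nonneg hb]
    exact lemA hr hb hba
  · rcases le_or_gt a 0 with ha | ha
    · -- both nonpositive: apply lemA to (-b, -a)
      have h := lemA hr (b := -a) (a := -b) (by linarith) (by linarith)
      rw [abs_of_nonpos ha, abs_of_nonpos hb.le]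
      rw [show -b + -a = -a + -b by ring] at h
      nlinarith [h]
    · -- a > 0 > b
      have h := lemB hr (a := a) (d := -b) ha.le (by linarith)
      rw [abs_of_pos ha, abs_of_neg hb]
      have e : a - b = a + -b := by ring
      rw [e]
      nlinarith [h]

/-- Proposition 2.2 (first inequality): for every `r ∈ (1, ∞)` there is a constant
`c_r > 0` such that for all reals `a, b` not both zero,
`(|a|^(r-2) a - |b|^(r-2) b)(a - b) ≥ c_r (|a| + |b|)^(r-2) |a - b|² ≥ 0`. -/
theorem duality_first_inequality (r : ℝ) (hr : 1 < r) :
    ∃ c : ℝ, 0 < c ∧ ∀ a b : ℝ, ¬(a = 0 ∧ b = 0) →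
      (|a| ^ (r - 2) * a - |b| ^ (r - 2) * b) * (a - b) ≥
          c * (|a| + |b|) ^ (r - 2) * |a - b| ^ (2 : ℝ) ∧
        c * (|a| + |b|) ^ (r - 2) * |a - b| ^ (2 : ℝ) ≥ 0 := by
  refine ⟨min (r - 1) ((2 : ℝ) ^ (1 - r)), lt_min (by linarith) (Real.rpow_pos_of_pos (by norm_num) _), fun a b _ => ?_⟩
  have habs : |a - b| ^ (2 : ℝ) = (a - b) ^ 2 := by
    rw [show (2 : ℝ) = ((2 : ℕ) : ℝ) by norm_num, Real.rpow_natCast, sq_abs]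
  constructor
  · rw [habs]
    rcases le_total b a with h | h
    · exact aux2 hr h
    · have := aux2 hr (a := b) (b := a) h
      have e1 : |b| + |a| = |a| + |b| := by ring
      rw [e1] at this
      nlinarith [this]
  · rw [habs]
    have hc0 : (0:ℝ) ≤ min (r - 1) ((2 : ℝ) ^ (1 - r)) :=
      le_min (by linarith) (Real.rpow_nonneg (by norm_num) _)
    exact mul_nonneg (mul_nonneg hc0 (Real.rpow_nonneg (by positivity) _)) (sq_nonneg _)
end

section
/- For every real exponent r ∈ [2, ∞) there exists a constant c*_r ∈ (0, 1] such that for all real numbers a, b one has (|a|^{r−2}·a − |b|^{r−2}·b)·(a − b) ≥ c*_r·|a − b|^r. -/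
/-- Proposition 2.2 (second inequality): for every `r ∈ [2, ∞)` there is a constant
`c*_r ∈ (0, 1]` such that for all reals `a, b`,
`(|a|^(r-2) a - |b|^(r-2) b)(a - b) ≥ c*_r |a - b|^r`. -/
theorem duality_second_inequality (r : ℝ) (hr : 2 ≤ r) :
    ∃ c : ℝ, 0 < c ∧ c ≤ 1 ∧ ∀ a b : ℝ,
      (|a| ^ (r - 2) * a - |b| ^ (r - 2) * b) * (a - b) ≥ c * |a - b| ^ r := by
  refine ⟨2 ^ (1 - r), by positivity, ?_, ?_⟩
  · calc (2:ℝ) ^ (1 - r) ≤ 2 ^ (0:ℝ) :=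
        Real.rpow_le_rpow_of_exponent_le (by norm_num) (by linarith)
      _ = 1 := Real.rpow_zero 2
  · intro a b
    rcases eq_or_ne a b with rfl | hab
    · simp [Real.zero_rpow (by positivity : r ≠ 0)]
    · have hd : (0:ℝ) < |a - b| := abs_pos.mpr (sub_ne_zero.mpr hab)
      set p := r - 2 with hp
      have hp0 : 0 ≤ p := by simp [hp]; linarith
      have hA : 0 ≤ |a| ^ p := Real.rpow_nonneg (abs_nonneg a) p
      have hB : 0 ≤ |b| ^ p := Real.rpow_nonneg (abs_nonneg b) p
      have key : (|a| ^ p - |b| ^ p) * (a ^ 2 - b ^ 2) ≥ 0 := by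
        rcases le_total |a| |b| with h | h
        · have h1 := Real.rpow_le_rpow (abs_nonneg a) h hp0
          have h2 : a ^ 2 ≤ b ^ 2 := by nlinarith [sq_abs a, sq_abs b, abs_nonneg a]
          nlinarith [mul_nonneg (sub_nonneg.mpr h1) (sub_nonneg.mpr h2)]
        · have h1 := Real.rpow_le_rpow (abs_nonneg b) h hp0
          have h2 : b ^ 2 ≤ a ^ 2 := by nlinarith [sq_abs a, sq_abs b, abs_nonneg b]
          nlinarith [mul_nonneg (sub_nonneg.mpr h1) (sub_nonneg.mpr h2)]
      have step1 : (|a| ^ p * a - |b| ^ p * b) * (a - b) ≥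
          (1/2) * (|a| ^ p + |b| ^ p) * (a - b) ^ 2 := by nlinarith [key]
      have hm : 0 ≤ max |a| |b| := le_max_of_le_left (abs_nonneg a)
      have hmax : |a - b| ≤ 2 * max |a| |b| := by
        have h1 : |a - b| ≤ |a| + |b| := abs_sub a b
        rcases le_total |a| |b| with h | h
        · rw [max_eq_right h]; linarith
        · rw [max_eq_left h]; linarith
      have h2 : |a - b| ^ p ≤ (2 * max |a| |b|) ^ p :=
        Real.rpow_le_rpow (abs_nonneg _) hmax hp0
      rw [Real.mul_rpow (by norm_num) hm] at h2
      have h3 : (max |a| |b|) ^ p ≤ |a| ^ p + |b| ^ p := by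
        rcases le_total |a| |b| with h | h
        · rw [max_eq_right h]; linarith
        · rw [max_eq_left h]; linarith
      have h2p : (0:ℝ) < (2:ℝ) ^ p := Real.rpow_pos_of_pos (by norm_num) p
      have hsum : |a - b| ^ p ≤ 2 ^ p * (|a| ^ p + |b| ^ p) := by
        calc |a - b| ^ p ≤ 2 ^ p * (max |a| |b|) ^ p := h2
          _ ≤ 2 ^ p * (|a| ^ p + |b| ^ p) := by nlinarith
      have hr' : |a - b| ^ r = |a - b| ^ p * (a - b) ^ 2 := by
        rw [show r = p + 2 by simp [hp], Real.rpow_add hd]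
        congr 1
        rw [show ((2:ℝ)) = ((2:ℕ):ℝ) by norm_num, Real.rpow_natCast, sq_abs]
      have hc : (0:ℝ) < 2 ^ (1 - r) := Real.rpow_pos_of_pos (by norm_num) _
      have hhalf : (2:ℝ) ^ (1 - r) * 2 ^ p = 1 / 2 := by
        rw [← Real.rpow_add (by norm_num)]
        rw [show 1 - r + p = -1 by simp [hp]; ring]
        rw [Real.rpow_neg_one]; norm_num
      calc (2:ℝ) ^ (1 - r) * |a - b| ^ r
          = 2 ^ (1 - r) * (|a - b| ^ p * (a - b) ^ 2) := by rw [hr']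
        _ ≤ 2 ^ (1 - r) * (2 ^ p * (|a| ^ p + |b| ^ p) * (a - b) ^ 2) := by
            apply mul_le_mul_of_nonneg_left _ hc.le
            exact mul_le_mul_of_nonneg_right hsum (sq_nonneg _)
        _ = (1/2) * (|a| ^ p + |b| ^ p) * (a - b) ^ 2 := by
            rw [show (2:ℝ) ^ (1 - r) * (2 ^ p * (|a| ^ p + |b| ^ p) * (a - b) ^ 2)
              = (2 ^ (1 - r) * 2 ^ p) * (|a| ^ p + |b| ^ p) * (a - b) ^ 2 by ring, hhalf]
        _ ≤ (|a| ^ p * a - |b| ^ p * b) * (a - b) := step1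
end

section
/- For every real exponent r ∈ [2, ∞) there exists a constant c'_r ∈ (0, 1] such that for all real numbers a, b one has sgn(a − b)·(|a|^{r−2}·a − |b|^{r−2}·b) ≥ c'_r·|a − b|^{r−1}. -/
open Real

/-- For nonnegative `t` and `r ≥ 2`, `|t|^(r-2) * t = t^(r-1)`. -/
lemma aux_abs_rpow (r : ℝ) (hr : 2 ≤ r) (t : ℝ) (ht : 0 ≤ t) :
    |t| ^ (r - 2) * t = t ^ (r - 1) := by
  rw [abs_of_nonneg ht, show r - 1 = (r - 2) + 1 by ring,
    Real.rpow_add' ht (by intro h; nlinarith), Real.rpow_one]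

/-- Superadditivity of `rpow` for exponents `≥ 1`. -/
lemma aux_superadd {x y p : ℝ} (hx : 0 ≤ x) (hy : 0 ≤ y) (hp : 1 ≤ p) :
    x ^ p + y ^ p ≤ (x + y) ^ p := by
  have hxy : (0:ℝ) ≤ x + y := by linarith
  have h1 : x ^ p ≤ x * (x + y) ^ (p - 1) := by
    calc x ^ p = x ^ (1 + (p - 1)) := by ring_nf
    _ = x * x ^ (p - 1) := by
        rw [Real.rpow_add' hx (by intro h; nlinarith), Real.rpow_one]
    _ ≤ x * (x + y) ^ (p - 1) :=
        mul_le_mul_of_nonneg_left (Real.rpow_le_rpow hx (by linarith) (by linarith)) hx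
  have h2 : y ^ p ≤ y * (x + y) ^ (p - 1) := by
    calc y ^ p = y ^ (1 + (p - 1)) := by ring_nf
    _ = y * y ^ (p - 1) := by
        rw [Real.rpow_add' hy (by intro h; nlinarith), Real.rpow_one]
    _ ≤ y * (x + y) ^ (p - 1) :=
        mul_le_mul_of_nonneg_left (Real.rpow_le_rpow hy (by linarith) (by linarith)) hy
  calc x ^ p + y ^ p ≤ (x + y) * (x + y) ^ (p - 1) := by nlinarith
    _ = (x + y) ^ (1 + (p - 1)) := by
        rw [Real.rpow_add' hxy (by intro h; nlinarith), Real.rpow_one]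
    _ = (x + y) ^ p := by ring_nf

/-- `(x+y)^p ≤ 2^p * (x^p + y^p)` for nonneg `x, y` and `p ≥ 0`. -/
lemma aux_doubling {x y p : ℝ} (hx : 0 ≤ x) (hy : 0 ≤ y) (hp : 0 ≤ p) :
    (x + y) ^ p ≤ 2 ^ p * (x ^ p + y ^ p) := by
  have hm : (0:ℝ) ≤ max x y := le_max_of_le_left hx
  have h1 : x + y ≤ 2 * max x y := by
    rcases le_total x y with h | h
    · have : max x y = y := max_eq_right h
      rw [this]; linarith
    · have : max x y = x := max_eq_left h
      rw [this]; linarith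
  have h2 : (x + y) ^ p ≤ (2 * max x y) ^ p :=
    Real.rpow_le_rpow (by linarith) h1 hp
  have h3 : (2 * max x y) ^ p = 2 ^ p * (max x y) ^ p :=
    Real.mul_rpow (by norm_num) hm
  have h4 : (max x y) ^ p ≤ x ^ p + y ^ p := by
    rcases le_total x y with h | h
    · rw [max_eq_right h]
      have : (0:ℝ) ≤ x ^ p := Real.rpow_nonneg hx p
      linarith
    · rw [max_eq_left h]
      have : (0:ℝ) ≤ y ^ p := Real.rpow_nonneg hy p
      linarith
  calc (x + y) ^ p ≤ 2 ^ p * (max x y) ^ p := by rw [← h3]; exact h2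
    _ ≤ 2 ^ p * (x ^ p + y ^ p) := by
        have : (0:ℝ) ≤ (2:ℝ) ^ p := Real.rpow_nonneg (by norm_num) p
        nlinarith

/-- Key estimate for `b < a`. -/
lemma aux_key (r : ℝ) (hr : 2 ≤ r) (a b : ℝ) (hab : b < a) :
    |a| ^ (r - 2) * a - |b| ^ (r - 2) * b ≥ 2 ^ (1 - r) * (a - b) ^ (r - 1) := by
  have hp : (1:ℝ) ≤ r - 1 := by linarith
  have hc1 : (2:ℝ) ^ (1 - r) ≤ 1 := by
    have := Real.rpow_le_one_of_one_le_of_nonpos (x := (2:ℝ)) (by norm_num)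
      (by linarith : 1 - r ≤ 0)
    simpa using this
  have hcpos : (0:ℝ) < (2:ℝ) ^ (1 - r) := Real.rpow_pos_of_pos (by norm_num) _
  rcases le_or_gt 0 b with hb | hb
  · -- 0 ≤ b < a
    have ha : 0 ≤ a := by linarith
    rw [aux_abs_rpow r hr a ha, aux_abs_rpow r hr b hb]
    have h := aux_superadd (x := a - b) (y := b) (by linarith) hb hp
    have h2 : (a - b) ^ (r - 1) + b ^ (r - 1) ≤ a ^ (r - 1) := by
      simpa using h
    have hnn : (0:ℝ) ≤ (a - b) ^ (r - 1) := Real.rpow_nonneg (by linarith) _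
    nlinarith
  · rcases le_or_gt a 0 with ha | ha
    · -- b < a ≤ 0 : use oddness
      have h1 : |a| ^ (r - 2) * a = -((-a) ^ (r - 1)) := by
        have := aux_abs_rpow r hr (-a) (by linarith)
        rw [abs_neg] at this
        nlinarith [this]
      have h2 : |b| ^ (r - 2) * b = -((-b) ^ (r - 1)) := by
        have := aux_abs_rpow r hr (-b) (by linarith)
        rw [abs_neg] at this
        nlinarith [this]
      rw [h1, h2]
      have h := aux_superadd (x := a - b) (y := -a) (by linarith) (by linarith) hp
      have h2' : (a - b) ^ (r - 1) + (-a) ^ (r - 1) ≤ (-b) ^ (r - 1) := by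
        have : a - b + -a = -b := by ring
        rwa [this] at h
      have hnn : (0:ℝ) ≤ (a - b) ^ (r - 1) := Real.rpow_nonneg (by linarith) _
      nlinarith
    · -- b < 0 < a
      rw [aux_abs_rpow r hr a (le_of_lt ha)]
      have h2 : |b| ^ (r - 2) * b = -((-b) ^ (r - 1)) := by
        have := aux_abs_rpow r hr (-b) (by linarith)
        rw [abs_neg] at this
        nlinarith [this]
      rw [h2]
      have h := aux_doubling (x := a) (y := -b) (le_of_lt ha) (by linarith)
        (by linarith : (0:ℝ) ≤ r - 1)
      have hab' : a + -b = a - b := by ring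
      rw [hab'] at h
      have hmul : (2:ℝ) ^ (1 - r) * (2:ℝ) ^ (r - 1) = 1 := by
        rw [← Real.rpow_add (by norm_num)]
        norm_num
      have := mul_le_mul_of_nonneg_left h (le_of_lt hcpos)
      rw [← mul_assoc, hmul, one_mul] at this
      linarith
/-- Proposition 2.2 (third inequality): for every `r ∈ [2, ∞)` there is a constant
`c'_r ∈ (0, 1]` such that for all reals `a, b`,
`sgn(a - b)(|a|^(r-2) a - |b|^(r-2) b) ≥ c'_r |a - b|^(r-1)`. -/
theorem duality_third_inequality (r : ℝ) (hr : 2 ≤ r) :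
    ∃ c : ℝ, 0 < c ∧ c ≤ 1 ∧ ∀ a b : ℝ,
      Real.sign (a - b) * (|a| ^ (r - 2) * a - |b| ^ (r - 2) * b) ≥
        c * |a - b| ^ (r - 1) := by
  refine ⟨2 ^ (1 - r), Real.rpow_pos_of_pos (by norm_num) _, ?_, ?_⟩
  · have := Real.rpow_le_one_of_one_le_of_nonpos (x := (2:ℝ)) (by norm_num)
      (by linarith : 1 - r ≤ 0)
    simpa using this
  · intro a b
    rcases lt_trichotomy a b with h | h | h
    · have hs : Real.sign (a - b) = -1 := Real.sign_of_neg (by linarith)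
      have habs : |a - b| = b - a := by rw [abs_of_neg (by linarith)]; ring
      have key := aux_key r hr b a h
      rw [hs, habs]
      nlinarith
    · subst h
      have : |a - a| = 0 := by simp
      rw [this, sub_self, Real.sign_zero, Real.zero_rpow (by intro hh; nlinarith)]
      simp
    · have hs : Real.sign (a - b) = 1 := Real.sign_of_pos (by linarith)
      have habs : |a - b| = a - b := abs_of_pos (by linarith)
      have key := aux_key r hr a b h
      rw [hs, habs]
      linarith
end

section
/- For every real exponent r ∈ (1, 2] and every ε > 0 there exists a constant c_{r,ε} > 0 such that for all real numbers a, b satisfying |a − b| ≥ ε·min{|a|, |b|}, one has (|a|^{r−2}·a − |b|^{r−2}·b)·(a − b) ≥ c_{r,ε}·|a − b|^r. -/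
private lemma phi_eq (r : ℝ) (hr1 : 1 < r) {x : ℝ} (hx : 0 ≤ x) :
    |x| ^ (r - 2) * x = x ^ (r - 1) := by
  rcases hx.eq_or_lt with h | h
  · simp [← h, Real.zero_rpow (by linarith : r - 1 ≠ 0)]
  · rw [abs_of_pos h, show x ^ (r - 2) * x = x ^ (r - 2) * x ^ (1 : ℝ) by
      rw [Real.rpow_one], ← Real.rpow_add h]
    rw [show r - 2 + 1 = r - 1 by ring]

private lemma rpow_split (r : ℝ) (hr1 : 1 < r) {x : ℝ} (hx : 0 ≤ x) :
    x ^ r = x ^ (r - 1) * x := by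
  rcases hx.eq_or_lt with h | h
  · simp [← h, Real.zero_rpow (by linarith : r ≠ 0)]
  · rw [show x ^ (r - 1) * x = x ^ (r - 1) * x ^ (1 : ℝ) by rw [Real.rpow_one],
      ← Real.rpow_add h]
    rw [show r - 1 + 1 = r by ring]

private lemma rpow_subadd {x y p : ℝ} (hx : 0 ≤ x) (hy : 0 ≤ y)
    (hp : 0 ≤ p) (hp1 : p ≤ 1) : (x + y) ^ p ≤ x ^ p + y ^ p := by
  have h := NNReal.rpow_add_le_add_rpow x.toNNReal y.toNNReal hp hp1
  have h2 := NNReal.coe_le_coe.2 h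
  push_cast at h2
  rwa [Real.coe_toNNReal x hx, Real.coe_toNNReal y hy] at h2

/-- Proposition 2.2 (fifth inequality): for every `r ∈ (1, 2]` and every `ε > 0` there
is a constant `c_{r,ε} > 0` such that for all reals `a, b` with
`|a - b| ≥ ε · min{|a|, |b|}`, one has
`(|a|^(r-2) a - |b|^(r-2) b)(a - b) ≥ c_{r,ε} |a - b|^r`. -/
theorem duality_fifth_inequality (r : ℝ) (hr1 : 1 < r) (hr2 : r ≤ 2)
    (ε : ℝ) (hε : 0 < ε) :
    ∃ c : ℝ, 0 < c ∧ ∀ a b : ℝ, |a - b| ≥ ε * min |a| |b| →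
      (|a| ^ (r - 2) * a - |b| ^ (r - 2) * b) * (a - b) ≥ c * |a - b| ^ r := by
  set c : ℝ := 1 - (1 + ε) ^ (1 - r) with hc
  have hεnn : (0:ℝ) ≤ 1 + ε := by linarith
  have hlt1 : (1 + ε) ^ (1 - r) < 1 :=
    Real.rpow_lt_one_of_one_lt_of_neg (by linarith) (by linarith)
  have hcpos : 0 < c := by simp only [hc, sub_pos]; exact hlt1
  have hc1 : c ≤ 1 := by
    have : 0 < (1 + ε) ^ (1 - r) := Real.rpow_pos_of_pos (by linarith) _
    simp only [hc]; linarith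
  -- key same-sign estimate
  have key : ∀ a b : ℝ, 0 ≤ b → b ≤ a → a - b ≥ ε * b →
      (a ^ (r - 1) - b ^ (r - 1)) * (a - b) ≥ c * ((a - b) ^ (r - 1) * (a - b)) := by
    intro a b hb hba h
    have hab : 0 ≤ a - b := by linarith
    have ha : 0 ≤ a := le_trans hb hba
    have h1 : (a - b) ^ (r - 1) ≤ a ^ (r - 1) :=
      Real.rpow_le_rpow hab (by linarith) (by linarith)
    have h2 : b ^ (r - 1) ≤ (1 + ε) ^ (1 - r) * a ^ (r - 1) := by
      have hba' : b ≤ a / (1 + ε) := by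
        rw [le_div_iff₀ (by linarith : (0:ℝ) < 1 + ε)]; nlinarith
      calc b ^ (r - 1) ≤ (a / (1 + ε)) ^ (r - 1) :=
            Real.rpow_le_rpow hb hba' (by linarith)
        _ = a ^ (r - 1) / (1 + ε) ^ (r - 1) := Real.div_rpow ha hεnn (r - 1)
        _ = (1 + ε) ^ (1 - r) * a ^ (r - 1) := by
            rw [div_eq_mul_inv, ← Real.rpow_neg hεnn]
            ring_nf
    have hmain : c * (a - b) ^ (r - 1) ≤ a ^ (r - 1) - b ^ (r - 1) := by
      have hc' : c * (a - b) ^ (r - 1) ≤ c * a ^ (r - 1) :=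
        mul_le_mul_of_nonneg_left h1 hcpos.le
      have : c * a ^ (r - 1) ≤ a ^ (r - 1) - b ^ (r - 1) := by
        have e : c * a ^ (r - 1) = a ^ (r - 1) - (1 + ε) ^ (1 - r) * a ^ (r - 1) := by
          rw [hc]; ring
        linarith
      linarith
    calc c * ((a - b) ^ (r - 1) * (a - b)) = (c * (a - b) ^ (r - 1)) * (a - b) := by ring
      _ ≤ (a ^ (r - 1) - b ^ (r - 1)) * (a - b) := mul_le_mul_of_nonneg_right hmain hab
  -- opposite sign case: needs no hypothesis
  have opp : ∀ a b : ℝ, 0 ≤ a → b ≤ 0 →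
      (|a| ^ (r - 2) * a - |b| ^ (r - 2) * b) * (a - b) ≥ c * |a - b| ^ r := by
    intro a b ha hb
    have hd : 0 ≤ -b := by linarith
    have hφb : |b| ^ (r - 2) * b = -((-b) ^ (r - 1)) := by
      rw [show |b| = |(-b)| by rw [abs_neg], show (|(-b)| ^ (r - 2) * b : ℝ)
        = -(|(-b)| ^ (r - 2) * (-b)) by ring, phi_eq r hr1 hd]
    rw [phi_eq r hr1 ha, hφb]
    have hab : 0 ≤ a - b := by linarith
    rw [abs_of_nonneg hab, rpow_split r hr1 hab]
    have hsub : (a - b) ^ (r - 1) ≤ a ^ (r - 1) + (-b) ^ (r - 1) := by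
      have := rpow_subadd ha hd (by linarith : (0:ℝ) ≤ r - 1) (by linarith)
      rwa [show a + -b = a - b by ring] at this
    have hpow : 0 ≤ (a - b) ^ (r - 1) := Real.rpow_nonneg hab _
    calc c * ((a - b) ^ (r - 1) * (a - b)) ≤ 1 * ((a - b) ^ (r - 1) * (a - b)) := by
          apply mul_le_mul_of_nonneg_right hc1 (by positivity)
      _ = (a - b) ^ (r - 1) * (a - b) := by ring
      _ ≤ (a ^ (r - 1) + (-b) ^ (r - 1)) * (a - b) :=
          mul_le_mul_of_nonneg_right hsub hab
      _ = (a ^ (r - 1) - -((-b) ^ (r - 1))) * (a - b) := by ring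
  -- both nonneg case
  have nn : ∀ a b : ℝ, 0 ≤ a → 0 ≤ b → |a - b| ≥ ε * min |a| |b| →
      (|a| ^ (r - 2) * a - |b| ^ (r - 2) * b) * (a - b) ≥ c * |a - b| ^ r := by
    intro a b ha hb h
    rw [phi_eq r hr1 ha, phi_eq r hr1 hb]
    rw [abs_of_nonneg ha, abs_of_nonneg hb] at h
    rcases le_total b a with hba | hba
    · rw [min_eq_right hba, abs_of_nonneg (by linarith : (0:ℝ) ≤ a - b)] at h
      rw [abs_of_nonneg (by linarith : (0:ℝ) ≤ a - b),
        rpow_split r hr1 (by linarith : (0:ℝ) ≤ a - b)]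
      exact key a b hb hba h
    · rw [min_eq_left hba, abs_sub_comm,
        abs_of_nonneg (by linarith : (0:ℝ) ≤ b - a)] at h
      have hk := key b a ha hba h
      rw [show (a ^ (r - 1) - b ^ (r - 1)) * (a - b)
          = (b ^ (r - 1) - a ^ (r - 1)) * (b - a) by ring, abs_sub_comm,
        abs_of_nonneg (by linarith : (0:ℝ) ≤ b - a),
        rpow_split r hr1 (by linarith : (0:ℝ) ≤ b - a)]
      exact hk
  refine ⟨c, hcpos, ?_⟩
  intro a b h
  rcases le_total 0 a with ha | ha <;> rcases le_total 0 b with hb | hb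
  · exact nn a b ha hb h
  · exact opp a b ha hb
  · have e : (|a| ^ (r - 2) * a - |b| ^ (r - 2) * b) * (a - b)
        = (|b| ^ (r - 2) * b - |a| ^ (r - 2) * a) * (b - a) := by ring
    rw [e, abs_sub_comm]
    exact opp b a hb ha
  · have h' : |(-a) - (-b)| ≥ ε * min |(-a)| |(-b)| := by
      rw [abs_neg, abs_neg, show (-a) - (-b) = -(a - b) by ring, abs_neg]
      exact h
    have := nn (-a) (-b) (by linarith) (by linarith) h'
    rw [abs_neg, abs_neg, show (-a) - (-b) = -(a - b) by ring, abs_neg] at this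
    have e : (|a| ^ (r - 2) * (-a) - |b| ^ (r - 2) * (-b)) * (-(a - b))
        = (|a| ^ (r - 2) * a - |b| ^ (r - 2) * b) * (a - b) := by ring
    rwa [e] at this
end

section
/- Let ξ, ς, c, τ, ϱ ∈ [0, ∞) and r ∈ [1, ∞), and assume that ξ ≤ τ·ε^{−ϱ}·ς + ε^r·c for all ε > 0. Then ξ ≤ (τ + 1)·(ς^{r/(r+ϱ)}·c^{ϱ/(r+ϱ)} + ς). -/
/-!
If `ς = 0`, letting `ε → 0` in the hypothesis gives `ξ ≤ 0`; if `c = 0`, take `ε = 1`.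
Otherwise choose the scale `ε = (ς / c) ^ (1 / (r + ϱ))` at which the two terms
`ε ^ (-ϱ) * ς` and `ε ^ r * c` coincide: both equal `ς ^ (r / (r + ϱ)) * c ^ (ϱ / (r + ϱ))`.
-/

open Filter Topology

lemma nonpos_of_forall_le_rpow_mul {ξ c r : ℝ} (hr : 0 < r)
    (h : ∀ ε : ℝ, 0 < ε → ξ ≤ ε ^ r * c) : ξ ≤ 0 := by
  have hlim : Tendsto (fun ε : ℝ => ε ^ r * c) (𝓝[>] 0) (𝓝 0) := by
    have := ((Real.continuousAt_rpow_const 0 r (Or.inr hr.le)).tendsto.mono_left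
      (nhdsWithin_le_nhds (s := Set.Ioi 0))).mul_const c
    simpa [Real.zero_rpow hr.ne'] using this
  exact ge_of_tendsto hlim (eventually_nhdsWithin_of_forall h)

lemma rpow_div_mul_self {a b : ℝ} (ha : 0 ≤ a) (hb : 0 < b) (s : ℝ) :
    (a / b) ^ s * b = a ^ s * b ^ (1 - s) := by
  rw [Real.div_rpow ha hb.le, Real.rpow_sub hb, Real.rpow_one]
  field_simp

lemma exists_pos_rpow_neg_mul_eq_and_rpow_mul_eq {ς c ϱ r : ℝ} (hς : 0 < ς) (hc : 0 < c)
    (hrϱ : r + ϱ ≠ 0) :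
    ∃ ε > 0, ε ^ (-ϱ) * ς = ς ^ (r / (r + ϱ)) * c ^ (ϱ / (r + ϱ)) ∧
      ε ^ r * c = ς ^ (r / (r + ϱ)) * c ^ (ϱ / (r + ϱ)) := by
  have hq : 0 ≤ ς / c := by positivity
  refine ⟨(ς / c) ^ (1 / (r + ϱ)), by positivity, ?_, ?_⟩
  · rw [← Real.rpow_mul hq, ← inv_div c ς, Real.inv_rpow (by positivity),
      ← Real.rpow_neg (by positivity), rpow_div_mul_self hc.le hς, mul_comm]
    congr 2
    · field_simp
      ring
    · field_simp
  · rw [← Real.rpow_mul hq, rpow_div_mul_self hς.le hc]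
    congr 2
    · field_simp
    · field_simp
      ring

theorem young_absorption_general (ξ ς c τ ϱ r : ℝ)
    (hς : 0 ≤ ς) (hc : 0 ≤ c) (hτ : 0 ≤ τ) (hϱ : 0 ≤ ϱ) (hr : 1 ≤ r)
    (h : ∀ ε : ℝ, 0 < ε → ξ ≤ τ * ε ^ (-ϱ) * ς + ε ^ r * c) :
    ξ ≤ (τ + 1) * (ς ^ (r / (r + ϱ)) * c ^ (ϱ / (r + ϱ)) + ς) := by
  have hrϱ : 0 < r + ϱ := by linarith
  rcases hς.eq_or_lt with rfl | hςpos
  · have hξ : ξ ≤ 0 := nonpos_of_forall_le_rpow_mul (by linarith) fun ε hε => by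
      simpa using h ε hε
    have hexp : r / (r + ϱ) ≠ 0 := (div_pos (by linarith) hrϱ).ne'
    simpa [Real.zero_rpow hexp] using hξ
  rcases hc.eq_or_lt with rfl | hcpos
  · have hξ : ξ ≤ τ * ς := by simpa using h 1 one_pos
    have : 0 ≤ ς ^ (r / (r + ϱ)) * (0 : ℝ) ^ (ϱ / (r + ϱ)) := by positivity
    nlinarith
  obtain ⟨ε, hε, hleft, hright⟩ :=
    exists_pos_rpow_neg_mul_eq_and_rpow_mul_eq hςpos hcpos hrϱ.ne'
  have hξ := h ε hε
  rw [mul_assoc, hleft, hright] at hξ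
  nlinarith

/-- Proposition 2.3 (Young-type absorption lemma): if `ξ, ς, c, τ, ϱ ≥ 0`, `r ≥ 1`, and
`ξ ≤ τ ε^(-ϱ) ς + ε^r c` for all `ε > 0`, then
`ξ ≤ (τ + 1)(ς^(r/(r+ϱ)) c^(ϱ/(r+ϱ)) + ς)`. -/
theorem young_absorption (ξ ς c τ ϱ r : ℝ)
    (hξ : 0 ≤ ξ) (hς : 0 ≤ ς) (hc : 0 ≤ c) (hτ : 0 ≤ τ) (hϱ : 0 ≤ ϱ) (hr : 1 ≤ r)
    (h : ∀ ε : ℝ, 0 < ε → ξ ≤ τ * ε ^ (-ϱ) * ς + ε ^ r * c) :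
    ξ ≤ (τ + 1) * (ς ^ (r / (r + ϱ)) * c ^ (ϱ / (r + ϱ)) + ς) :=
  young_absorption_general ξ ς c τ ϱ r hς hc hτ hϱ hr h
end

section
/- Let k₀ ≥ 0 and let φ be a non-negative, non-increasing function on the half line [k₀, ∞). Suppose there exist constants c, α₁, α₂ > 0 and δ > 1 such that φ(h) ≤ c·((h − k)^{−α₁} + (h − k)^{−α₂})·φ(k)^δ for all h > k ≥ k₀. Then there exists ς > 0 such that φ(t) = 0 for every t ≥ k₀ + ς. -/
/-!
Along the levels `kₙ = k₀ + ς (1 - 2⁻ⁿ)` the gaps are `ς 2⁻⁽ⁿ⁺¹⁾`, so for `ς ≥ 1` the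
hypothesis gives `φ(kₙ₊₁) ≤ C bⁿ φ(kₙ)^δ` with `b = 2^max α₁ α₂` and `C = 2 c b ς^(-min α₁ α₂)`.
A recursion of this shape with `δ > 1` forces geometric decay `φ(kₙ) ≤ φ(k₀) θⁿ`,
`θ = b^(-1/(δ-1)) < 1`, as soon as `C φ(k₀)^(δ-1) ≤ θ`, which holds for `ς` large.
Then `φ(k₀ + ς) ≤ φ(kₙ) → 0`.
-/

open Filter Topology

theorem le_mul_pow_of_succ_le_mul_pow_mul_rpow {Y : ℕ → ℝ} {C b θ δ : ℝ}
    (hY : ∀ n, 0 ≤ Y n) (hC : 0 ≤ C) (hb : 0 ≤ b) (hθ : 0 ≤ θ) (hδ : 0 < δ)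
    (hbθ : b * θ ^ δ ≤ θ) (hY₀ : C * Y 0 ^ (δ - 1) ≤ θ)
    (hstep : ∀ n, Y (n + 1) ≤ C * b ^ n * Y n ^ δ) (n : ℕ) :
    Y n ≤ Y 0 * θ ^ n := by
  induction n with
  | zero => simp
  | succ n ih =>
    have hY₀δ : Y 0 ^ δ = Y 0 ^ (δ - 1) * Y 0 := by
      rw [← Real.rpow_add_one' (hY 0) (by linarith), sub_add_cancel]
    calc Y (n + 1) ≤ C * b ^ n * (Y 0 * θ ^ n) ^ δ :=
          (hstep n).trans (by gcongr; exact hY n)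
      _ = C * Y 0 ^ (δ - 1) * Y 0 * (b * θ ^ δ) ^ n := by
          rw [Real.mul_rpow (hY 0) (by positivity), ← Real.rpow_pow_comm hθ, hY₀δ, mul_pow]
          ring
      _ ≤ θ * Y 0 * θ ^ n := by
          have := hY 0
          gcongr
      _ = Y 0 * θ ^ (n + 1) := by ring

theorem Real.mul_rpow_neg_le {x r a γ A : ℝ} (hx : 1 ≤ x) (hr₀ : 0 < r) (hr₁ : r ≤ 1)
    (ha : a ≤ γ) (hA : γ ≤ A) : (x * r) ^ (-γ) ≤ x ^ (-a) * r ^ (-A) := by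
  rw [Real.mul_rpow (by linarith) hr₀.le]
  exact mul_le_mul (Real.rpow_le_rpow_of_exponent_le hx (neg_le_neg ha))
    (Real.rpow_le_rpow_of_exponent_ge hr₀ hr₁ (neg_le_neg hA)) (by positivity) (by positivity)

theorem Real.mul_rpow_neg_add_mul_rpow_neg_le {x r α₁ α₂ : ℝ} (hx : 1 ≤ x) (hr₀ : 0 < r)
    (hr₁ : r ≤ 1) :
    (x * r) ^ (-α₁) + (x * r) ^ (-α₂) ≤ 2 * x ^ (-min α₁ α₂) * r ^ (-max α₁ α₂) := by
  have h₁ := Real.mul_rpow_neg_le hx hr₀ hr₁ (min_le_left α₁ α₂) (le_max_left α₁ α₂)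
  have h₂ := Real.mul_rpow_neg_le hx hr₀ hr₁ (min_le_right α₁ α₂) (le_max_right α₁ α₂)
  linarith

theorem Real.mul_rpow_rpow_neg_inv_sub_one {b δ : ℝ} (hb : 0 < b) (hδ : δ ≠ 1) :
    b * (b ^ (-(δ - 1)⁻¹)) ^ δ = b ^ (-(δ - 1)⁻¹) := by
  rw [← Real.rpow_mul hb.le]
  nth_rewrite 1 [← Real.rpow_one b]
  rw [← Real.rpow_add hb]
  congr 1
  field_simp [sub_ne_zero.2 hδ]
  ring

theorem exists_one_le_mul_rpow_neg_le {K a θ : ℝ} (ha : 0 < a) (hθ : 0 < θ) :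
    ∃ x, 1 ≤ x ∧ K * x ^ (-a) ≤ θ := by
  have hlim : Tendsto (fun x : ℝ => K * x ^ (-a)) atTop (𝓝 0) := by
    simpa using (tendsto_rpow_neg_atTop ha).const_mul K
  exact ((eventually_ge_atTop 1).and (hlim.eventually (ge_mem_nhds hθ))).exists

noncomputable def dyadicLevel (k₀ ς : ℝ) (n : ℕ) : ℝ := k₀ + ς * (1 - 2⁻¹ ^ n)

theorem dyadicLevel_zero (k₀ ς : ℝ) : dyadicLevel k₀ ς 0 = k₀ := by simp [dyadicLevel]

theorem dyadicLevel_succ_sub (k₀ ς : ℝ) (n : ℕ) :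
    dyadicLevel k₀ ς (n + 1) - dyadicLevel k₀ ς n = ς * 2⁻¹ ^ (n + 1) := by
  simp only [dyadicLevel, pow_succ]; ring

theorem dyadicLevel_mem_Icc {k₀ ς : ℝ} (hς : 0 ≤ ς) (n : ℕ) :
    dyadicLevel k₀ ς n ∈ Set.Icc k₀ (k₀ + ς) := by
  have h₀ : (0 : ℝ) ≤ 2⁻¹ ^ n := by positivity
  have h₁ : (2⁻¹ : ℝ) ^ n ≤ 1 := pow_le_one₀ (by norm_num) (by norm_num)
  constructor <;> simp only [dyadicLevel] <;> nlinarith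

theorem le_mul_pow_mul_rpow_dyadicLevel {φ : ℝ → ℝ} {k₀ ς c α₁ α₂ δ : ℝ} (hc : 0 ≤ c)
    (hς : 1 ≤ ς) (hiter : ∀ h k, k₀ ≤ k → k < h →
      φ h ≤ c * ((h - k) ^ (-α₁) + (h - k) ^ (-α₂)) * φ k ^ δ)
    {n : ℕ} (hφ : 0 ≤ φ (dyadicLevel k₀ ς n)) :
    φ (dyadicLevel k₀ ς (n + 1)) ≤ 2 * c * 2 ^ max α₁ α₂ * ς ^ (-min α₁ α₂) *
      (2 ^ max α₁ α₂) ^ n * φ (dyadicLevel k₀ ς n) ^ δ := by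
  set k := dyadicLevel k₀ ς
  have hr₀ : (0 : ℝ) < 2⁻¹ ^ (n + 1) := by positivity
  have hr₁ : (2⁻¹ : ℝ) ^ (n + 1) ≤ 1 := pow_le_one₀ (by norm_num) (by norm_num)
  have hgap : k (n + 1) - k n = ς * 2⁻¹ ^ (n + 1) := dyadicLevel_succ_sub k₀ ς n
  have hpow : ((2⁻¹ : ℝ) ^ (n + 1)) ^ (-max α₁ α₂) = 2 ^ max α₁ α₂ * (2 ^ max α₁ α₂) ^ n := by
    rw [inv_pow, Real.inv_rpow (by positivity), Real.rpow_neg (by positivity), inv_inv,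
      ← Real.rpow_pow_comm zero_le_two, pow_succ, mul_comm]
  calc φ (k (n + 1)) ≤ c * ((k (n + 1) - k n) ^ (-α₁) + (k (n + 1) - k n) ^ (-α₂)) * φ (k n) ^ δ :=
        hiter _ _ (dyadicLevel_mem_Icc (by linarith) n).1 (by rw [← sub_pos, hgap]; positivity)
    _ ≤ c * (2 * ς ^ (-min α₁ α₂) * ((2⁻¹ : ℝ) ^ (n + 1)) ^ (-max α₁ α₂)) * φ (k n) ^ δ := by
        rw [hgap]
        gcongr
        exact Real.mul_rpow_neg_add_mul_rpow_neg_le hς hr₀ hr₁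
    _ = _ := by rw [hpow]; ring

theorem degiorgi_iteration_general (φ : ℝ → ℝ) (k₀ : ℝ)
    (hnonneg : ∀ t, k₀ ≤ t → 0 ≤ φ t)
    (hmono : ∀ k h, k₀ ≤ k → k ≤ h → φ h ≤ φ k)
    (c α₁ α₂ δ : ℝ) (hc : 0 < c) (hα₁ : 0 < α₁) (hα₂ : 0 < α₂) (hδ : 1 < δ)
    (hiter : ∀ h k, k₀ ≤ k → k < h →
      φ h ≤ c * ((h - k) ^ (-α₁) + (h - k) ^ (-α₂)) * φ k ^ δ) :
    ∃ ς : ℝ, 0 < ς ∧ ∀ t, k₀ + ς ≤ t → φ t = 0 := by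
  set b : ℝ := 2 ^ max α₁ α₂
  have hb : 1 < b := Real.one_lt_rpow one_lt_two (lt_max_of_lt_left hα₁)
  set θ := b ^ (-(δ - 1)⁻¹)
  have hθ₀ : 0 < θ := Real.rpow_pos_of_pos (by linarith) _
  have hθ₁ : θ < 1 :=
    Real.rpow_lt_one_of_one_lt_of_neg hb (neg_neg_of_pos (inv_pos.2 (by linarith)))
  obtain ⟨ς, hς, hςθ⟩ :=
    exists_one_le_mul_rpow_neg_le (K := 2 * c * b * φ k₀ ^ (δ - 1)) (lt_min hα₁ hα₂) hθ₀
  have hk := dyadicLevel_mem_Icc (k₀ := k₀) (by linarith : 0 ≤ ς)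
  have hdecay : ∀ n, φ (dyadicLevel k₀ ς n) ≤ φ k₀ * θ ^ n := by
    simpa [dyadicLevel_zero] using le_mul_pow_of_succ_le_mul_pow_mul_rpow
      (Y := fun n => φ (dyadicLevel k₀ ς n)) (fun n => hnonneg _ (hk n).1) (by positivity)
      (by positivity) hθ₀.le (by linarith)
      (Real.mul_rpow_rpow_neg_inv_sub_one (by linarith) hδ.ne').le
      (by rw [dyadicLevel_zero]; exact (le_of_eq (by ring)).trans hςθ)
      (fun n => le_mul_pow_mul_rpow_dyadicLevel hc.le hς hiter (hnonneg _ (hk n).1))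
  have hlim : Tendsto (fun n : ℕ => φ k₀ * θ ^ n) atTop (𝓝 0) := by
    simpa using (tendsto_pow_atTop_nhds_zero_of_lt_one hθ₀.le hθ₁).const_mul (φ k₀)
  have hφς : φ (k₀ + ς) ≤ 0 :=
    ge_of_tendsto' hlim fun n => (hmono _ _ (hk n).1 (hk n).2).trans (hdecay n)
  exact ⟨ς, by linarith, fun t ht =>
    le_antisymm ((hmono _ _ (by linarith) ht).trans hφς) (hnonneg t (by linarith))⟩

/-- Lemma 2.1 (two-exponent De Giorgi–Stampacchia iteration lemma): let `k₀ ≥ 0` and let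
`φ` be non-negative and non-increasing on `[k₀, ∞)`.  If there are constants
`c, α₁, α₂ > 0` and `δ > 1` with
`φ(h) ≤ c ((h - k)^(-α₁) + (h - k)^(-α₂)) φ(k)^δ` for all `h > k ≥ k₀`,
then there is `ς > 0` with `φ(t) = 0` for every `t ≥ k₀ + ς`. -/
theorem degiorgi_iteration (φ : ℝ → ℝ) (k₀ : ℝ) (hk₀ : 0 ≤ k₀)
    (hnonneg : ∀ t, k₀ ≤ t → 0 ≤ φ t)
    (hmono : ∀ k h, k₀ ≤ k → k ≤ h → φ h ≤ φ k)
    (c α₁ α₂ δ : ℝ) (hc : 0 < c) (hα₁ : 0 < α₁) (hα₂ : 0 < α₂) (hδ : 1 < δ)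
    (hiter : ∀ h k, k₀ ≤ k → k < h →
      φ h ≤ c * ((h - k) ^ (-α₁) + (h - k) ^ (-α₂)) * φ k ^ δ) :
    ∃ ς : ℝ, 0 < ς ∧ ∀ t, k₀ + ς ≤ t → φ t = 0 :=
  degiorgi_iteration_general φ k₀ hnonneg hmono c α₁ α₂ δ hc hα₁ hα₂ hδ hiter
end

section
/- Let λ ∈ (1, ∞) and k ≥ 0. Then for all real numbers a, b one has (|a|^{λ−2}·a − |b|^{λ−2}·b)·T_k(a − b) ≥ 0. -/
/-- The truncation `T_k(t) := sgn(t) · max(|t| - k, 0)`. -/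
noncomputable def trunc (k t : ℝ) : ℝ := Real.sign t * max (|t| - k) 0

private lemma rpow_mul_self (lam : ℝ) (x : ℝ) (hx : 0 ≤ x) (hlam : 1 < lam) :
    x ^ (lam - 2) * x = x ^ (lam - 1) := by
  rcases eq_or_lt_of_le hx with h | h
  · rw [← h, mul_zero, Real.zero_rpow (show lam - 1 ≠ 0 from (by linarith : (0:ℝ) < lam - 1).ne')]
  · rw [show lam - 1 = lam - 2 + 1 by ring, Real.rpow_add_one (ne_of_gt h)]

private lemma f_mono (lam : ℝ) (hlam : 1 < lam) {a b : ℝ} (hab : a ≤ b) :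
    |a| ^ (lam - 2) * a ≤ |b| ^ (lam - 2) * b := by
  rcases le_or_gt 0 a with ha | ha
  · have hb : 0 ≤ b := le_trans ha hab
    rw [abs_of_nonneg ha, abs_of_nonneg hb, rpow_mul_self lam a ha hlam,
      rpow_mul_self lam b hb hlam]
    exact Real.rpow_le_rpow ha hab (by linarith)
  · rcases le_or_gt 0 b with hb | hb
    · have h1 : |a| ^ (lam - 2) * a ≤ 0 :=
        mul_nonpos_of_nonneg_of_nonpos (Real.rpow_nonneg (abs_nonneg a) _) ha.le
      have h2 : 0 ≤ |b| ^ (lam - 2) * b :=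
        mul_nonneg (Real.rpow_nonneg (abs_nonneg b) _) hb
      linarith
    · have ea : |a| ^ (lam - 2) * a = -(|a| ^ (lam - 1)) := by
        rw [← rpow_mul_self lam |a| (abs_nonneg a) hlam, abs_of_neg ha]; ring
      have eb : |b| ^ (lam - 2) * b = -(|b| ^ (lam - 1)) := by
        rw [← rpow_mul_self lam |b| (abs_nonneg b) hlam, abs_of_neg hb]; ring
      rw [ea, eb, neg_le_neg_iff]
      exact Real.rpow_le_rpow (abs_nonneg b)
        (by rw [abs_of_neg ha, abs_of_neg hb]; linarith) (by linarith)

/-- Lemma 4.1 (c), pointwise: for `λ ∈ (1, ∞)` and `k ≥ 0`, for all reals `a, b`,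
`(|a|^(λ-2) a - |b|^(λ-2) b) · T_k(a - b) ≥ 0`. -/
theorem trunc_monotone_pairing (lam : ℝ) (hlam : 1 < lam) (k : ℝ) (hk : 0 ≤ k) :
    ∀ a b : ℝ,
      (|a| ^ (lam - 2) * a - |b| ^ (lam - 2) * b) * trunc k (a - b) ≥ 0 := by
  intro a b
  rcases le_or_gt a b with hab | hab
  · have h1 : |a| ^ (lam - 2) * a - |b| ^ (lam - 2) * b ≤ 0 := by
      have := f_mono lam hlam hab
      linarith
    have h2 : trunc k (a - b) ≤ 0 := by
      unfold trunc
      rcases eq_or_lt_of_le hab with h | h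
      · simp [h]
      · have : a - b < 0 := by linarith
        rw [Real.sign_of_neg this]
        have : (0:ℝ) ≤ max (|a - b| - k) 0 := le_max_right _ _
        linarith
    nlinarith [mul_nonneg (neg_nonneg.2 h1) (neg_nonneg.2 h2)]
  · have h1 : 0 ≤ |a| ^ (lam - 2) * a - |b| ^ (lam - 2) * b := by
      have := f_mono lam hlam hab.le
      linarith
    have h2 : 0 ≤ trunc k (a - b) := by
      unfold trunc
      have : 0 < a - b := by linarith
      rw [Real.sign_of_pos this]
      have : (0:ℝ) ≤ max (|a - b| - k) 0 := le_max_right _ _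
      linarith
    exact mul_nonneg h1 h2
end

section
/- Let λ ∈ (1, ∞) and k ≥ 0. Then for all real numbers a₁, a₂, b₁, b₂, writing A := a₁ − a₂ and B := b₁ − b₂, one has (|A|^{λ−2}·A − |B|^{λ−2}·B)·(T_k(a₁ − b₁) − T_k(a₂ − b₂)) ≥ 0. -/
lemma trunc_eq (k t : ℝ) (hk : 0 ≤ k) :
    trunc k t = max (t - k) 0 + min (t + k) 0 := by
  unfold trunc
  rcases lt_trichotomy t 0 with ht | ht | ht
  · rw [Real.sign_of_neg ht, abs_of_neg ht]
    rcases le_total (t + k) 0 with h | h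
    · rw [max_eq_left (by linarith : (0:ℝ) ≤ -t - k), min_eq_left h,
        max_eq_right (by linarith : t - k ≤ (0:ℝ))]
      ring
    · rw [max_eq_right (by linarith : -t - k ≤ (0:ℝ)), min_eq_right h,
        max_eq_right (by linarith : t - k ≤ (0:ℝ))]
      ring
  · simp [ht, Real.sign_zero, max_eq_right (by linarith : -k ≤ (0:ℝ)),
      min_eq_right hk]
  · rw [Real.sign_of_pos ht, abs_of_pos ht, min_eq_right (by linarith), one_mul,
      add_zero]

lemma trunc_mono (k : ℝ) (hk : 0 ≤ k) : Monotone (trunc k) := by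
  intro x y hxy
  rw [trunc_eq k x hk, trunc_eq k y hk]
  gcongr

lemma phi_mono (lam : ℝ) (hlam : 1 < lam) :
    Monotone (fun t : ℝ => |t| ^ (lam - 2) * t) := by
  have hl1 : (0:ℝ) ≤ lam - 1 := by linarith
  have key : ∀ t : ℝ, 0 < t → |t| ^ (lam - 2) * t = t ^ (lam - 1) := by
    intro t ht
    rw [abs_of_pos ht, show lam - 1 = lam - 2 + 1 by ring,
      Real.rpow_add_one (ne_of_gt ht)]
  intro x y hxy
  simp only
  rcases lt_trichotomy x 0 with hx | hx | hx
  · rcases lt_trichotomy y 0 with hy | hy | hy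
    · have hxx : |x| ^ (lam - 2) * x = -((-x) ^ (lam - 1)) := by
        rw [abs_of_neg hx, show lam - 1 = lam - 2 + 1 by ring,
          Real.rpow_add_one (ne_of_gt (by linarith : (0:ℝ) < -x))]; ring
      have hyy : |y| ^ (lam - 2) * y = -((-y) ^ (lam - 1)) := by
        rw [abs_of_neg hy, show lam - 1 = lam - 2 + 1 by ring,
          Real.rpow_add_one (ne_of_gt (by linarith : (0:ℝ) < -y))]; ring
      rw [hxx, hyy]
      have := Real.rpow_le_rpow (by linarith : (0:ℝ) ≤ -y) (by linarith : -y ≤ -x) hl1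
      linarith
    · subst hy
      simp only [mul_zero]
      exact mul_nonpos_of_nonneg_of_nonpos (Real.rpow_nonneg (abs_nonneg x) _) hx.le
    · calc |x| ^ (lam - 2) * x ≤ 0 :=
            mul_nonpos_of_nonneg_of_nonpos (Real.rpow_nonneg (abs_nonneg x) _) hx.le
        _ ≤ |y| ^ (lam - 2) * y :=
            mul_nonneg (Real.rpow_nonneg (abs_nonneg y) _) hy.le
  · subst hx
    simp only [mul_zero]
    exact mul_nonneg (Real.rpow_nonneg (abs_nonneg y) _) (by linarith)
  · have hy : 0 < y := lt_of_lt_of_le hx hxy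
    rw [key x hx, key y hy]
    exact Real.rpow_le_rpow hx.le hxy hl1

/-- Lemma 4.1 (d), pointwise: for `λ ∈ (1, ∞)` and `k ≥ 0`, for all reals
`a₁, a₂, b₁, b₂`, writing `A := a₁ - a₂` and `B := b₁ - b₂`,
`(|A|^(λ-2) A - |B|^(λ-2) B) · (T_k(a₁ - b₁) - T_k(a₂ - b₂)) ≥ 0`. -/
theorem trunc_monotone_pairing_diff (lam : ℝ) (hlam : 1 < lam) (k : ℝ) (hk : 0 ≤ k) :
    ∀ a₁ a₂ b₁ b₂ : ℝ,
      (|a₁ - a₂| ^ (lam - 2) * (a₁ - a₂) - |b₁ - b₂| ^ (lam - 2) * (b₁ - b₂)) *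
          (trunc k (a₁ - b₁) - trunc k (a₂ - b₂)) ≥ 0 := by
  intro a₁ a₂ b₁ b₂
  rcases le_total (a₁ - b₁) (a₂ - b₂) with h | h
  · have h1 : a₁ - a₂ ≤ b₁ - b₂ := by linarith
    have h2 := phi_mono lam hlam h1
    have h3 := trunc_mono k hk h
    have := mul_nonneg (neg_nonneg.mpr (sub_nonpos.mpr h2))
      (neg_nonneg.mpr (sub_nonpos.mpr h3))
    simp only [neg_sub] at this
    nlinarith [this]
  · have h1 : b₁ - b₂ ≤ a₁ - a₂ := by linarith
    have h2 := phi_mono lam hlam h1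
    have h3 := trunc_mono k hk h
    exact mul_nonneg (by simpa using sub_nonneg.mpr h2) (sub_nonneg.mpr h3)
end

section
/- Let λ ∈ [2, ∞) and k ≥ 0. Then there exists a constant C₀ > 0, depending only on λ, such that for all real numbers a, b one has (|a|^{λ−2}·a − |b|^{λ−2}·b)·T_k(a − b) ≥ C₀·|T_k(a − b)|^λ. -/

lemma superadd_rpow {p : ℝ} (hp : 1 ≤ p) {x y : ℝ} (hx : 0 ≤ x) (hy : 0 ≤ y) :
    x ^ p + y ^ p ≤ (x + y) ^ p := by
  have h := NNReal.add_rpow_le_rpow_add (x.toNNReal) (y.toNNReal) hp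
  have := NNReal.coe_le_coe.mpr h
  simpa [NNReal.coe_rpow, Real.coe_toNNReal x hx, Real.coe_toNNReal y hy,
    ← Real.toNNReal_add hx hy, max_eq_left (by linarith : (0:ℝ) ≤ x + y)] using this

lemma key_ineq (q : ℝ) (hq : 1 ≤ q) (a b : ℝ) (hab : b ≤ a) :
    (2:ℝ)^(-q) * (a - b)^q ≤ |a|^(q-1)*a - |b|^(q-1)*b := by
  have hq0 : (0:ℝ) < q := lt_of_lt_of_le one_pos hq
  have hpow : ∀ t : ℝ, 0 ≤ t → t^(q-1)*t = t^q := by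
    intro t ht
    rcases eq_or_lt_of_le ht with h | h
    · simp [← h, Real.zero_rpow (ne_of_gt hq0)]
    · rw [← Real.rpow_add_one (ne_of_gt h)]
      ring_nf
  have h2q : (0:ℝ) < (2:ℝ)^(-q) := Real.rpow_pos_of_pos two_pos _
  have h2q1 : (2:ℝ)^(-q) ≤ 1 := by
    apply Real.rpow_le_one_of_one_le_of_nonpos one_le_two (by linarith)
  rcases le_or_gt 0 b with hb | hb
  · -- 0 ≤ b ≤ a
    have ha : 0 ≤ a := le_trans hb hab
    rw [abs_of_nonneg ha, abs_of_nonneg hb, hpow a ha, hpow b hb]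
    have h1 : (a-b)^q + b^q ≤ a^q := by
      have := superadd_rpow hq (x := a-b) (y := b) (by linarith) hb
      simpa using this
    have h2 : (0:ℝ) ≤ (a-b)^q := Real.rpow_nonneg (by linarith) _
    nlinarith [mul_le_of_le_one_left h2 h2q1]
  · rcases le_or_gt a 0 with ha | ha
    · -- b < a ≤ 0
      rw [abs_of_nonpos ha, abs_of_nonpos (le_of_lt hb)]
      have h1 : (a-b)^q + (-a)^q ≤ (-b)^q := by
        have := superadd_rpow hq (x := a-b) (y := -a) (by linarith) (by linarith)
        simpa [show a - b + -a = -b by ring] using this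
      have h2 : (0:ℝ) ≤ (a-b)^q := Real.rpow_nonneg (by linarith) _
      have e1 : (-a)^(q-1)*a = -((-a)^(q-1)*(-a)) := by ring
      have e2 : (-b)^(q-1)*b = -((-b)^(q-1)*(-b)) := by ring
      rw [e1, e2, hpow (-a) (by linarith), hpow (-b) (by linarith)]
      nlinarith [mul_le_of_le_one_left h2 h2q1]
    · -- b < 0 < a
      rw [abs_of_nonneg (le_of_lt ha), abs_of_nonpos (le_of_lt hb), hpow a (le_of_lt ha)]
      have e2 : (-b)^(q-1)*b = -((-b)^(q-1)*(-b)) := by ring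
      rw [e2, hpow (-b) (by linarith)]
      have hm : a - b ≤ 2 * max a (-b) := by
        rcases le_total a (-b) with h | h
        · rw [max_eq_right h]; linarith
        · rw [max_eq_left h]; linarith
      have hm0 : (0:ℝ) ≤ max a (-b) := le_trans (le_of_lt ha) (le_max_left _ _)
      have h1 : (a-b)^q ≤ (2 * max a (-b))^q :=
        Real.rpow_le_rpow (by linarith) hm hq0.le
      rw [Real.mul_rpow (by norm_num) hm0] at h1
      have h3 : (max a (-b))^q ≤ a^q + (-b)^q := by
        rcases le_total a (-b) with h | h
        · rw [max_eq_right h]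
          have : (0:ℝ) ≤ a^q := Real.rpow_nonneg ha.le _
          linarith
        · rw [max_eq_left h]
          have : (0:ℝ) ≤ (-b)^q := Real.rpow_nonneg (by linarith) _
          linarith
      have h4 : (2:ℝ)^(-q) * (2:ℝ)^q = 1 := by
        rw [← Real.rpow_add two_pos]; simp
      calc (2:ℝ)^(-q) * (a-b)^q ≤ (2:ℝ)^(-q) * ((2:ℝ)^q * (max a (-b))^q) := by
            exact mul_le_mul_of_nonneg_left h1 h2q.le
        _ = (max a (-b))^q := by rw [← mul_assoc, h4, one_mul]
        _ ≤ a^q + (-b)^q := h3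
        _ = a^q - -(-b)^q := by ring

/-- Lemma 4.1 (e), pointwise: for `λ ∈ [2, ∞)` and `k ≥ 0`, there is a constant
`C₀ > 0` depending only on `λ` such that for all reals `a, b`,
`(|a|^(λ-2) a - |b|^(λ-2) b) · T_k(a - b) ≥ C₀ |T_k(a - b)|^λ`. -/
theorem trunc_coercive_pairing (lam : ℝ) (hlam : 2 ≤ lam) (k : ℝ) (hk : 0 ≤ k) :
    ∃ C₀ : ℝ, 0 < C₀ ∧ ∀ a b : ℝ,
      (|a| ^ (lam - 2) * a - |b| ^ (lam - 2) * b) * trunc k (a - b) ≥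
        C₀ * |trunc k (a - b)| ^ lam := by
  set q : ℝ := lam - 1 with hqdef
  have hq : 1 ≤ q := by simp [hqdef]; linarith
  have hq0 : (0:ℝ) < q := by linarith
  refine ⟨(2:ℝ)^(-q), Real.rpow_pos_of_pos two_pos _, fun a b => ?_⟩
  have hC : (0:ℝ) < (2:ℝ)^(-q) := Real.rpow_pos_of_pos two_pos _
  have hlam0 : lam ≠ 0 := by linarith
  have heq : lam - 2 = q - 1 := by simp [hqdef]; ring
  rw [heq]
  set t : ℝ := a - b with htdef
  rcases le_or_gt (|t|) k with hle | hgt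
  · -- trunc is zero
    have hT : trunc k t = 0 := by
      unfold trunc
      rw [max_eq_right (by linarith)]
      ring
    rw [hT, abs_zero, Real.zero_rpow hlam0, mul_zero, mul_zero]
  · have htne : t ≠ 0 := by
      intro h; rw [h, abs_zero] at hgt; linarith
    rcases lt_or_gt_of_ne htne with hneg | hpos
    · -- t < 0
      have hT : trunc k t = t + k := by
        unfold trunc
        rw [Real.sign_of_neg hneg, abs_of_neg hneg,
          max_eq_left (by rw [abs_of_neg hneg] at hgt; linarith)]
        ring
      have hTneg : t + k < 0 := by rw [abs_of_neg hneg] at hgt; linarith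
      have hkey := key_ineq q hq b a (by linarith)
      have h1 : (2:ℝ)^(-q) * (-(t+k))^q ≤ (2:ℝ)^(-q) * (-t)^q := by
        apply mul_le_mul_of_nonneg_left _ hC.le
        apply Real.rpow_le_rpow (by linarith) (by linarith) hq0.le
      have h2 : (2:ℝ)^(-q) * (-(t+k))^q ≤ |b|^(q-1)*b - |a|^(q-1)*a := by
        have e : b - a = -t := by rw [htdef]; ring
        rw [e] at hkey
        linarith
      rw [hT, abs_of_neg hTneg]
      have h3 : (|a|^(q-1)*a - |b|^(q-1)*b) * (t+k)
          = (|b|^(q-1)*b - |a|^(q-1)*a) * (-(t+k)) := by ring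
      rw [ge_iff_le, h3]
      have h4 : (2:ℝ)^(-q) * (-(t+k))^lam = ((2:ℝ)^(-q) * (-(t+k))^q) * (-(t+k)) := by
        rw [mul_assoc, ← Real.rpow_add_one (by linarith : -(t+k) ≠ 0)]
        norm_num [hqdef]
      rw [h4]
      exact mul_le_mul_of_nonneg_right h2 (by linarith)
    · -- t > 0
      have hT : trunc k t = t - k := by
        unfold trunc
        rw [Real.sign_of_pos hpos, abs_of_pos hpos,
          max_eq_left (by rw [abs_of_pos hpos] at hgt; linarith)]
        ring
      have hTpos : 0 < t - k := by rw [abs_of_pos hpos] at hgt; linarith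
      have hkey := key_ineq q hq a b (by linarith)
      have h1 : (2:ℝ)^(-q) * (t-k)^q ≤ (2:ℝ)^(-q) * (a-b)^q := by
        apply mul_le_mul_of_nonneg_left _ hC.le
        apply Real.rpow_le_rpow (by linarith) (by simp [htdef]; linarith) hq0.le
      have h2 : (2:ℝ)^(-q) * (t-k)^q ≤ |a|^(q-1)*a - |b|^(q-1)*b := h1.trans hkey
      rw [hT, abs_of_pos hTpos, ge_iff_le]
      have h4 : (2:ℝ)^(-q) * (t-k)^lam = ((2:ℝ)^(-q) * (t-k)^q) * (t-k) := by
        rw [mul_assoc, ← Real.rpow_add_one (by linarith : t-k ≠ 0)]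
        norm_num [hqdef]
      rw [h4]
      exact mul_le_mul_of_nonneg_right h2 hTpos.le
end

section
/- Let p ∈ (1, ∞). Then for all real numbers a, b one has |a − b|^{p−2}·(a − b)·(a⁻ − b⁻) ≤ −|a⁻ − b⁻|^p. -/
/-- Kernel estimate in the proof of Theorem 5.2: for `p ∈ (1, ∞)` and all reals `a, b`,
writing `t⁻ := max(-t, 0)`, one has
`|a - b|^(p-2) (a - b)(a⁻ - b⁻) ≤ -|a⁻ - b⁻|^p`. -/
theorem negative_part_kernel_estimate (p : ℝ) (hp : 1 < p) (a b : ℝ) :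
    |a - b| ^ (p - 2) * (a - b) * (max (-a) 0 - max (-b) 0) ≤
      -(|max (-a) 0 - max (-b) 0| ^ p) := by
  set A := max (-a) 0 with hA
  set B := max (-b) 0 with hB
  have hAB : |A - B| ≤ |a - b| := by
    calc |A - B| ≤ |(-a) - (-b)| := abs_max_sub_max_le_abs _ _ _
    _ = |a - b| := by rw [show (-a) - (-b) = -(a - b) by ring, abs_neg]
  rcases eq_or_ne A B with h | h
  · rw [h]
    simp [Real.zero_rpow (by linarith : p ≠ 0)]
  · have hab : a ≠ b := fun h' => h (by rw [hA, hB, h'])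
    have hs : (0:ℝ) < |a - b| := abs_pos.mpr (sub_ne_zero.mpr hab)
    have ht : (0:ℝ) < |A - B| := abs_pos.mpr (sub_ne_zero.mpr h)
    have key : (a - b) * (A - B) = -(|a - b| * |A - B|) := by
      rcases lt_trichotomy A B with hlt | heq | hgt
      · have hBpos : (0:ℝ) < B := lt_of_le_of_lt (le_max_right _ _) hlt
        have hBb : B = -b := by
          rcases max_choice (-b) (0:ℝ) with h1 | h1
          · rw [hB]; exact h1
          · rw [hB, h1] at hBpos; exact absurd hBpos (lt_irrefl 0)
        have hba : b < a := by
          have : -a ≤ A := le_max_left _ _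
          have : -a < -b := lt_of_le_of_lt this (hBb ▸ hlt)
          linarith
        rw [abs_of_pos (by linarith : (0:ℝ) < a - b),
            abs_of_neg (by linarith : A - B < 0)]
        ring
      · exact absurd heq h
      · have hApos : (0:ℝ) < A := lt_of_le_of_lt (le_max_right _ _) hgt
        have hAa : A = -a := by
          rcases max_choice (-a) (0:ℝ) with h1 | h1
          · rw [hA]; exact h1
          · rw [hA, h1] at hApos; exact absurd hApos (lt_irrefl 0)
        have hba : a < b := by
          have : -b ≤ B := le_max_left _ _
          have : -b < -a := lt_of_le_of_lt this (hAa ▸ hgt)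
          linarith
        rw [abs_of_neg (by linarith : a - b < 0),
            abs_of_pos (by linarith : (0:ℝ) < A - B)]
        ring
    rw [mul_assoc, key,
        show |a - b| ^ (p - 2) * -(|a - b| * |A - B|)
          = -((|a - b| ^ (p - 2) * |a - b|) * |A - B|) by ring,
        neg_le_neg_iff]
    have h1 : |a - b| ^ (p - 2) * |a - b| = |a - b| ^ (p - 1) := by
      rw [show p - 1 = (p - 2) + 1 by ring, Real.rpow_add_one hs.ne']
    have h2 : |A - B| ^ p = |A - B| ^ (p - 1) * |A - B| := by
      rw [show p = (p - 1) + 1 by ring, Real.rpow_add_one ht.ne']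
      ring_nf
    rw [h1, h2]
    exact mul_le_mul_of_nonneg_right
      (Real.rpow_le_rpow ht.le hAB (by linarith)) ht.le
end
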